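/- arXiv:1801.06414 — 2 statements merged into one kernel-verified Lean document; each statement's English description precedes it below -/
import Mathlib

section
/- With the ⋆-product F_A ⋆ F_B = F_A ⊗ F_B + (Tr F_A / Tr S_A)(Tr F_B / Tr S_B) A_A ⊗ A_B, for all unit vectors ψ ∈ ℂ^{d_A}, φ ∈ ℂ^{d_B} and all Hermitian F_A on (ℂ^{d_A})^{⊗2}, F_B on (ℂ^{d_B})^{⊗2}: Tr((F_A ⋆ F_B)(|ψ⟩⟨ψ|^{⊗2} ⊗ |φ⟩⟨φ|^{⊗2})) = Tr(F_A |ψ⟩⟨ψ|^{⊗2}) · Tr(F_B |φ⟩⟨φ|^{⊗2}). -/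
open Matrix BigOperators
open scoped Kronecker ComplexConjugate

noncomputable section

def swapMat (I : Type*) [DecidableEq I] [Fintype I] : Matrix (I × I) (I × I) ℂ :=
  fun p q => if p.1 = q.2 ∧ p.2 = q.1 then 1 else 0

def symProj (I : Type*) [DecidableEq I] [Fintype I] : Matrix (I × I) (I × I) ℂ :=
  (2⁻¹ : ℂ) • (1 + swapMat I)

def asymProj (I : Type*) [DecidableEq I] [Fintype I] : Matrix (I × I) (I × I) ℂ :=
  (2⁻¹ : ℂ) • (1 - swapMat I)

/-- reordering (1,2,3,4) ↦ (1,3,2,4) of tensor factors -/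
def reorder (A B : Type*) : ((A × B) × (A × B)) ≃ ((A × A) × (B × B)) where
  toFun x := ((x.1.1, x.2.1), (x.1.2, x.2.2))
  invFun y := ((y.1.1, y.2.1), (y.1.2, y.2.2))
  left_inv x := rfl
  right_inv y := rfl

/-- |ψ⟩⟨ψ| -/
def outer {I : Type*} (ψ : I → ℂ) : Matrix I I ℂ := fun i j => ψ i * conj (ψ j)

/-- ψ ⊗ ψ -/
def vec2 {I : Type*} (ψ : I → ℂ) : I × I → ℂ := fun p => ψ p.1 * ψ p.2

/-- |ψ⟩⟨ψ|^{⊗2} -/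
def pure2 {I : Type*} (ψ : I → ℂ) : Matrix (I × I) (I × I) ℂ := outer (vec2 ψ)

def unitVec {I : Type*} [Fintype I] (ψ : I → ℂ) : Prop := ∑ i, Complex.normSq (ψ i) = 1

/-- partial trace over the second factor -/
def ptraceB {A B : Type*} [Fintype B] (M : Matrix (A × B) (A × B) ℂ) : Matrix A A ℂ :=
  fun a a' => ∑ b, M (a, b) (a', b)

/-- reindex an operator on (ℂ^A ⊗ ℂ^B)^{⊗2} as an operator on (ℂ^A)^{⊗2} ⊗ (ℂ^B)^{⊗2} -/
def reindexAB {A B : Type*} (M : Matrix ((A × B) × (A × B)) ((A × B) × (A × B)) ℂ) :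
    Matrix ((A × A) × (B × B)) ((A × A) × (B × B)) ℂ :=
  M.submatrix (reorder A B).symm (reorder A B).symm

/-- the ⋆-product of the toy theory -/
def starProd {dA dB : ℕ} (FA : Matrix (Fin dA × Fin dA) (Fin dA × Fin dA) ℂ)
    (FB : Matrix (Fin dB × Fin dB) (Fin dB × Fin dB) ℂ) :
    Matrix ((Fin dA × Fin dA) × (Fin dB × Fin dB)) ((Fin dA × Fin dA) × (Fin dB × Fin dB)) ℂ :=
  FA ⊗ₖ FB + ((FA.trace / (symProj (Fin dA)).trace) * (FB.trace / (symProj (Fin dB)).trace)) •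
    (asymProj (Fin dA) ⊗ₖ asymProj (Fin dB))

/-! The swap fixes `ψ ⊗ ψ`, so `|ψ⟩⟨ψ|^{⊗2}` is annihilated by the antisymmetric projector.
Hence the correction term of the ⋆-product drops out of the trace against a product state, and
what remains is the trace of a Kronecker product, which factors. -/

section Swap

variable {I : Type*} [DecidableEq I] [Fintype I]

lemma swapMat_mul_apply {J : Type*} (M : Matrix (I × I) J ℂ) (p : I × I) (j : J) :
    (swapMat I * M) p j = M p.swap j := by
  rw [mul_apply, Finset.sum_eq_single p.swap]
  · simp [swapMat]
  · rintro q - hq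
    have hpq : ¬(p.1 = q.2 ∧ p.2 = q.1) := fun h => hq (Prod.ext h.2.symm h.1.symm)
    simp [swapMat, hpq]
  · simp

omit [DecidableEq I] [Fintype I] in
lemma vec2_swap (ψ : I → ℂ) (p : I × I) : vec2 ψ p.swap = vec2 ψ p :=
  mul_comm _ _

lemma swapMat_mul_pure2 (ψ : I → ℂ) : swapMat I * pure2 ψ = pure2 ψ := by
  ext p q
  rw [swapMat_mul_apply]
  simp only [pure2, outer, vec2_swap]

lemma asymProj_mul_pure2 (ψ : I → ℂ) : asymProj I * pure2 ψ = 0 := by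
  rw [asymProj, smul_mul, sub_mul, one_mul, swapMat_mul_pure2, sub_self, smul_zero]

end Swap

theorem stmt_10_general (dA dB : ℕ)
    (FA : Matrix (Fin dA × Fin dA) (Fin dA × Fin dA) ℂ)
    (FB : Matrix (Fin dB × Fin dB) (Fin dB × Fin dB) ℂ)
    (ψ : Fin dA → ℂ) (φ : Fin dB → ℂ) :
    (starProd FA FB * (pure2 ψ ⊗ₖ pure2 φ)).trace =
      (FA * pure2 ψ).trace * (FB * pure2 φ).trace := by
  rw [starProd, add_mul, smul_mul, ← mul_kronecker_mul, ← mul_kronecker_mul,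
    asymProj_mul_pure2, zero_kronecker, smul_zero, add_zero, trace_kronecker]

theorem stmt_10 (dA dB : ℕ)
    (FA : Matrix (Fin dA × Fin dA) (Fin dA × Fin dA) ℂ) (hFA : FA.IsHermitian)
    (FB : Matrix (Fin dB × Fin dB) (Fin dB × Fin dB) ℂ) (hFB : FB.IsHermitian)
    (ψ : Fin dA → ℂ) (hψ : unitVec ψ) (φ : Fin dB → ℂ) (hφ : unitVec φ) :
    (starProd FA FB * (pure2 ψ ⊗ₖ pure2 φ)).trace =
      (FA * pure2 ψ).trace * (FB * pure2 φ).trace :=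
  stmt_10_general dA dB FA FB ψ φ
end
end

section
/- For a unit vector ψ ∈ ℂ^{d_A} ⊗ ℂ^{d_B} with reduced density matrix ρ_A = Tr_B|ψ⟩⟨ψ|, the toy-model reduced state satisfies ω_A = S_A(ρ_A ⊗ ρ_A)S_A + (1 − Tr(S_A(ρ_A ⊗ ρ_A)S_A)) · S_A/Tr(S_A). In particular, using the spectral decomposition ρ_A = Σ_i α_i|i⟩⟨i|, the weight of the second term is Σ_{i<j} α_i α_j, which is strictly positive whenever ρ_A has rank ≥ 2. -/
open Matrix BigOperators
open scoped Kronecker ComplexConjugate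

noncomputable section

/-- the toy-model reduced state of a pure bipartite state -/
def toyReduced {dA dB : ℕ} (ψ : Fin dA × Fin dB → ℂ) :
    Matrix (Fin dA × Fin dA) (Fin dA × Fin dA) ℂ :=
  ptraceB (((1 : Matrix (Fin dA × Fin dA) (Fin dA × Fin dA) ℂ) ⊗ₖ symProj (Fin dB)) *
      reindexAB (pure2 ψ)) +
    (((asymProj (Fin dA) ⊗ₖ asymProj (Fin dB)) * reindexAB (pure2 ψ)).trace /
        (symProj (Fin dA)).trace) • symProj (Fin dA)

open Finset

/-!
Entrywise, both `ptrace_B ((1 ⊗ S_B) |ψ⟩⟨ψ|^{⊗2})` and `S_A (ρ ⊗ ρ) S_A` equal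
`½ (ρ_{ac} ρ_{a'c'} + ρ_{a'c} ρ_{ac'})`. Taking traces, `Tr (S_A (ρ ⊗ ρ) S_A) = ½ ((Tr ρ)² + Tr ρ²)`
while the antisymmetric weight `Tr ((A_A ⊗ A_B) |ψ⟩⟨ψ|^{⊗2})` is `½ ((Tr ρ)² - Tr ρ²)`; as `Tr ρ = 1`
the weight is `1 - Tr (S_A (ρ ⊗ ρ) S_A)`. In an orthonormal eigenbasis `Tr ρ = ∑ αᵢ` and
`Tr ρ² = ∑ αᵢ²`, so the weight is `½ ((∑ αᵢ)² - ∑ αᵢ²) = ∑_{i<j} αᵢ αⱼ`. The rank of `ρ` is at most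
the number of nonzero `αᵢ`, so rank `≥ 2` provides a strictly positive term in this sum.
-/

section Symmetrizer

variable {A : Type*} [Fintype A] [DecidableEq A]

lemma swapMat_mul_apply_s17 (X : Matrix (A × A) (A × A) ℂ) (p q : A × A) :
    (swapMat A * X) p q = X p.swap q := by
  simp [Matrix.mul_apply, swapMat, Fintype.sum_prod_type, ite_and, Prod.swap]

lemma mul_swapMat_apply (X : Matrix (A × A) (A × A) ℂ) (p q : A × A) :
    (X * swapMat A) p q = X p q.swap := by
  simp [Matrix.mul_apply, swapMat, Fintype.sum_prod_type, ite_and, Prod.swap, eq_comm]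

lemma symProj_mul_mul_symProj_apply (X : Matrix (A × A) (A × A) ℂ) (p q : A × A) :
    (symProj A * X * symProj A) p q =
      4⁻¹ * (X p q + X p.swap q + X p q.swap + X p.swap q.swap) := by
  simp only [symProj, Matrix.smul_mul, Matrix.mul_smul, add_mul, mul_add, Matrix.one_mul,
    Matrix.mul_one, Matrix.smul_apply, Matrix.add_apply, swapMat_mul_apply_s17, mul_swapMat_apply,
    smul_eq_mul]
  ring

lemma symProj_mul_kronecker_self_mul_symProj_apply (ρ : Matrix A A ℂ) (a a' c c' : A) :
    (symProj A * (ρ ⊗ₖ ρ) * symProj A) (a, a') (c, c') =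
      2⁻¹ * (ρ a c * ρ a' c' + ρ a' c * ρ a c') := by
  rw [symProj_mul_mul_symProj_apply]
  simp only [Prod.swap_prod_mk, Matrix.kroneckerMap_apply]
  ring

lemma trace_symProj_mul_kronecker_self_mul_symProj (ρ : Matrix A A ℂ) :
    (symProj A * (ρ ⊗ₖ ρ) * symProj A).trace = 2⁻¹ * (ρ.trace ^ 2 + (ρ * ρ).trace) := by
  rw [Matrix.trace, Fintype.sum_prod_type]
  simp only [Matrix.diag_apply, symProj_mul_kronecker_self_mul_symProj_apply]
  simp only [Matrix.trace, Matrix.diag_apply, Matrix.mul_apply, sq, Finset.sum_mul_sum,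
    ← Finset.mul_sum, ← Finset.sum_add_distrib]
  simp only [Finset.sum_add_distrib, Finset.mul_sum, mul_comm]

end Symmetrizer

section OneKronecker

variable {I J B : Type*} [Fintype I] [DecidableEq I] [Fintype B] [DecidableEq B]

lemma one_kronecker_swapMat_mul_apply (X : Matrix (I × (B × B)) J ℂ) (i : I) (p : B × B)
    (j : J) : (((1 : Matrix I I ℂ) ⊗ₖ swapMat B) * X) (i, p) j = X (i, p.swap) j := by
  simp [Matrix.mul_apply, Fintype.sum_prod_type, Matrix.one_apply, swapMat, ite_and, Prod.swap]

lemma one_kronecker_symProj_mul_apply (X : Matrix (I × (B × B)) J ℂ) (i : I) (p : B × B)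
    (j : J) :
    (((1 : Matrix I I ℂ) ⊗ₖ symProj B) * X) (i, p) j = 2⁻¹ * (X (i, p) j + X (i, p.swap) j) := by
  rw [symProj, Matrix.kronecker_smul, Matrix.kronecker_add, Matrix.one_kronecker_one,
    Matrix.smul_mul, Matrix.add_mul, Matrix.one_mul, Matrix.smul_apply, Matrix.add_apply,
    one_kronecker_swapMat_mul_apply, smul_eq_mul]

end OneKronecker

section ReducedState

variable {A B : Type*}

lemma reindexAB_pure2_apply (ψ : A × B → ℂ) (a a' c c' : A) (b b' e e' : B) :
    reindexAB (pure2 ψ) ((a, a'), (b, b')) ((c, c'), (e, e')) =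
      ψ (a, b) * ψ (a', b') * (conj (ψ (c, e)) * conj (ψ (c', e'))) := by
  simp [reindexAB, pure2, outer, vec2, reorder]

variable [Fintype B]

lemma ptraceB_outer_apply (ψ : A × B → ℂ) (a c : A) :
    ptraceB (outer ψ) a c = ∑ b, ψ (a, b) * conj (ψ (c, b)) := rfl

variable [Fintype A]

lemma trace_ptraceB_outer (ψ : A × B → ℂ) :
    (ptraceB (outer ψ)).trace = ∑ p, (Complex.normSq (ψ p) : ℂ) := by
  simp [Matrix.trace, ptraceB_outer_apply, Complex.mul_conj, Fintype.sum_prod_type]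

variable [DecidableEq A] [DecidableEq B]

lemma ptraceB_one_kronecker_symProj_mul_reindexAB_pure2 (ψ : A × B → ℂ) :
    ptraceB (((1 : Matrix (A × A) (A × A) ℂ) ⊗ₖ symProj B) * reindexAB (pure2 ψ)) =
      symProj A * (ptraceB (outer ψ) ⊗ₖ ptraceB (outer ψ)) * symProj A := by
  ext ⟨a, a'⟩ ⟨c, c'⟩
  simp only [symProj_mul_kronecker_self_mul_symProj_apply, ptraceB_outer_apply, Finset.sum_mul_sum]
  simp only [ptraceB, one_kronecker_symProj_mul_apply, Fintype.sum_prod_type, Prod.swap_prod_mk,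
    reindexAB_pure2_apply, ← Finset.sum_add_distrib, Finset.mul_sum]
  exact Finset.sum_congr rfl fun b _ => Finset.sum_congr rfl fun b' _ => by ring

lemma trace_asymProj_kronecker_asymProj_mul_reindexAB_pure2 (ψ : A × B → ℂ) :
    ((asymProj A ⊗ₖ asymProj B) * reindexAB (pure2 ψ)).trace =
      2⁻¹ * ((ptraceB (outer ψ)).trace ^ 2 - (ptraceB (outer ψ) * ptraceB (outer ψ)).trace) := by
  set ρ := ptraceB (outer ψ)
  -- the cross terms `ψ(a',b) ψ(a,b') conj (ψ(a,b) ψ(a',b'))` are the products `ρ a' a * ρ a a'`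
  have hsq : (ρ * ρ).trace = ∑ a, ∑ a', ρ a' a * ρ a a' :=
    Finset.sum_congr rfl fun _ _ => Finset.sum_congr rfl fun _ _ => mul_comm _ _
  rw [hsq, Matrix.trace]
  simp only [ρ, Matrix.trace, Matrix.diag_apply, Matrix.mul_apply, ptraceB_outer_apply, sq,
    Finset.sum_mul_sum]
  simp only [asymProj, Matrix.kroneckerMap_apply, Matrix.smul_apply, Matrix.sub_apply,
    Matrix.one_apply, swapMat, ite_and, smul_eq_mul, mul_sub, mul_ite, mul_one, mul_zero, sub_mul,
    ite_mul, zero_mul, Finset.sum_sub_distrib, Fintype.sum_prod_type, Finset.sum_ite_eq,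
    Finset.mem_univ, ↓reduceIte, Prod.mk.eta, reindexAB_pure2_apply, Finset.mul_sum]
  simp only [← Finset.sum_sub_distrib]
  refine Finset.sum_congr rfl fun a _ => Finset.sum_congr rfl fun a' _ =>
    Finset.sum_congr rfl fun b _ => Finset.sum_congr rfl fun b' _ => ?_
  ring

end ReducedState

section Spectral

variable {ι n : Type*} [Fintype ι] [Fintype n]

lemma trace_outer (u : n → ℂ) : (outer u).trace = ∑ x, conj (u x) * u x :=
  Finset.sum_congr rfl fun _ _ => mul_comm _ _

lemma trace_outer_mul_outer (u w : n → ℂ) :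
    (outer u * outer w).trace = (∑ x, conj (u x) * w x) * ∑ x, conj (w x) * u x := by
  simp only [Matrix.trace, Matrix.diag_apply, Matrix.mul_apply, outer, Finset.sum_mul_sum]
  rw [Finset.sum_comm]
  exact Finset.sum_congr rfl fun _ _ => Finset.sum_congr rfl fun _ _ => by ring

lemma Matrix.rank_add_le {m K : Type*} [Field K] (M N : Matrix m n K) :
    (M + N).rank ≤ M.rank + N.rank := by
  rw [Matrix.rank, Matrix.rank, Matrix.rank, Matrix.mulVecLin_add]
  exact (Submodule.finrank_mono (LinearMap.range_add_le _ _)).trans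
    (Submodule.finrank_add_le_finrank_add_finrank _ _)

lemma rank_smul_outer_le_one (c : ℂ) (w : n → ℂ) : (c • outer w).rank ≤ 1 := by
  have h : c • outer w = vecMulVec (c • w) (star w) := by
    ext i j
    simp [outer, vecMulVec_apply, mul_assoc]
  exact h ▸ Matrix.rank_vecMulVec_le _ _

lemma rank_sum_smul_outer_le (c : ι → ℂ) (v : ι → n → ℂ) :
    (∑ i, c i • outer (v i)).rank ≤ #{i | c i ≠ 0} := by
  calc (∑ i, c i • outer (v i)).rank
      = (∑ i with c i ≠ 0, c i • outer (v i)).rank := by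
        rw [Finset.sum_filter_of_ne]
        intro i _ hi hc
        simp [hc] at hi
    _ ≤ ∑ i with c i ≠ 0, (c i • outer (v i)).rank :=
        Finset.le_sum_of_subadditive _ Matrix.rank_zero.le Matrix.rank_add_le _ _
    _ ≤ ∑ i with c i ≠ 0, 1 := Finset.sum_le_sum fun i _ => rank_smul_outer_le_one _ _
    _ = #{i | c i ≠ 0} := by simp

variable [DecidableEq ι] {v : ι → n → ℂ}

lemma trace_sum_smul_outer
    (hv : ∀ i j, (∑ x, conj (v i x) * v j x) = if i = j then 1 else 0) (c : ι → ℂ) :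
    (∑ i, c i • outer (v i)).trace = ∑ i, c i := by
  simp [Matrix.trace_sum, Matrix.trace_smul, trace_outer, hv]

lemma trace_sum_smul_outer_mul_self
    (hv : ∀ i j, (∑ x, conj (v i x) * v j x) = if i = j then 1 else 0) (c : ι → ℂ) :
    ((∑ i, c i • outer (v i)) * ∑ i, c i • outer (v i)).trace = ∑ i, c i * c i := by
  simp [Finset.sum_mul_sum, Matrix.trace_sum, Matrix.trace_smul, trace_outer_mul_outer, hv]

end Spectral

section PairSums

variable {ι : Type*} [Fintype ι] [LinearOrder ι]

lemma sum_mul_sum_self_eq {R : Type*} [CommSemiring R] (β : ι → R) :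
    (∑ i, β i) * ∑ i, β i =
      ∑ i, β i * β i + 2 * ∑ p : ι × ι with p.1 < p.2, β p.1 * β p.2 := by
  have hswap : ∑ p : ι × ι with p.2 < p.1, β p.1 * β p.2 =
      ∑ p : ι × ι with p.1 < p.2, β p.1 * β p.2 :=
    Finset.sum_equiv (Equiv.prodComm ι ι) (by simp) (fun p _ => mul_comm _ _)
  have hdiag : ∑ p : ι × ι with p.1 = p.2, β p.1 * β p.2 = ∑ i, β i * β i := by
    rw [Finset.sum_filter, Fintype.sum_prod_type]
    simp
  have htri : ∀ p : ι × ι, β p.1 * β p.2 = (if p.1 < p.2 then β p.1 * β p.2 else 0) +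
      (if p.2 < p.1 then β p.1 * β p.2 else 0) + (if p.1 = p.2 then β p.1 * β p.2 else 0) := by
    intro p
    rcases lt_trichotomy p.1 p.2 with h | h | h
    · simp [h, not_lt_of_gt h, ne_of_lt h]
    · simp [h]
    · simp [h, not_lt_of_gt h, ne_of_gt h]
  rw [Finset.sum_mul_sum, ← Fintype.sum_prod_type', Finset.sum_congr rfl fun p _ => htri p]
  simp only [Finset.sum_add_distrib, ← Finset.sum_filter, hswap, hdiag]
  ring

lemma sum_filter_lt_mul_pos {α : ι → ℝ} (hα : ∀ i, 0 ≤ α i) (h : 1 < #{i | α i ≠ 0}) :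
    0 < ∑ p : ι × ι with p.1 < p.2, α p.1 * α p.2 := by
  set s : Finset ι := {i | α i ≠ 0}
  have hs : s.Nonempty := Finset.card_pos.1 (one_pos.trans h)
  have hpos : ∀ i ∈ s, 0 < α i := fun i hi => (hα i).lt_of_ne (Finset.mem_filter.1 hi).2.symm
  refine Finset.sum_pos' (fun p _ => mul_nonneg (hα _) (hα _)) ⟨(s.min' hs, s.max' hs), ?_, ?_⟩
  · simpa using Finset.min'_lt_max'_of_card s h
  · exact mul_pos (hpos _ (s.min'_mem hs)) (hpos _ (s.max'_mem hs))

end PairSums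

theorem stmt_17 (dA dB : ℕ) (ψ : Fin dA × Fin dB → ℂ) (hψ : unitVec ψ)
    (ρA : Matrix (Fin dA) (Fin dA) ℂ) (hρ : ρA = ptraceB (outer ψ))
    (α : Fin dA → ℝ) (hα : ∀ i, 0 ≤ α i)
    (v : Fin dA → Fin dA → ℂ)
    (hortho : ∀ i j, (∑ x, conj (v i x) * v j x) = if i = j then 1 else 0)
    (hspec : ρA = ∑ i, (α i : ℂ) • outer (v i)) :
    toyReduced ψ =
        symProj (Fin dA) * (ρA ⊗ₖ ρA) * symProj (Fin dA) +
          (1 - (symProj (Fin dA) * (ρA ⊗ₖ ρA) * symProj (Fin dA)).trace) •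
            ((symProj (Fin dA)).trace⁻¹ • symProj (Fin dA)) ∧
      (1 - (symProj (Fin dA) * (ρA ⊗ₖ ρA) * symProj (Fin dA)).trace) =
        ∑ p ∈ Finset.univ.filter (fun p : Fin dA × Fin dA => p.1 < p.2),
          ((α p.1 : ℂ) * (α p.2 : ℂ)) ∧
      (2 ≤ ρA.rank →
        0 < (1 - (symProj (Fin dA) * (ρA ⊗ₖ ρA) * symProj (Fin dA)).trace).re) := by
  have htr : ρA.trace = 1 := by
    rw [hρ, trace_ptraceB_outer]
    exact_mod_cast hψ
  have hweight : 1 - (symProj (Fin dA) * (ρA ⊗ₖ ρA) * symProj (Fin dA)).trace =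
      2⁻¹ * (1 - (ρA * ρA).trace) := by
    rw [trace_symProj_mul_kronecker_self_mul_symProj, htr]
    ring
  have hpairs : 1 - (symProj (Fin dA) * (ρA ⊗ₖ ρA) * symProj (Fin dA)).trace =
      ∑ p : Fin dA × Fin dA with p.1 < p.2, (α p.1 : ℂ) * (α p.2 : ℂ) := by
    have hsq := sum_mul_sum_self_eq fun i => (α i : ℂ)
    rw [← trace_sum_smul_outer hortho, ← hspec, htr] at hsq
    rw [hweight, hspec, trace_sum_smul_outer_mul_self hortho]
    linear_combination (2⁻¹ : ℂ) * hsq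
  refine ⟨?_, hpairs, fun hrank => ?_⟩
  · rw [toyReduced, ptraceB_one_kronecker_symProj_mul_reindexAB_pure2,
      trace_asymProj_kronecker_asymProj_mul_reindexAB_pure2, ← hρ, htr, hweight, smul_smul,
      div_eq_mul_inv, one_pow]
  · have hsupp := rank_sum_smul_outer_le (fun i => (α i : ℂ)) v
    simp only [Complex.ofReal_ne_zero, ← hspec] at hsupp
    rw [hpairs, Complex.re_sum]
    exact_mod_cast sum_filter_lt_mul_pos hα (hrank.trans hsupp)
end
end
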